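/- For every integer λ ≥ 1 there exists a constant C_λ > 0, depending only on λ, such that for every integer n ≥ 1 the matrix S_λ is invertible and ‖S_λ⁻¹‖ ≤ C_λ n², where ‖·‖ is the matrix norm induced by the ℓ∞ vector norm. -/

import Mathlib

open Matrix

/-- Truncated conversion operator from ultraspherical `C^(λ)` coefficients to `C^(λ+1)`
coefficients (1-based indexing): `(S_λ)_{j,j} = λ/(λ+j-1)`, `(S_λ)_{j,j+2} = -λ/(λ+j+1)`. -/
noncomputable def Sl (lam n : ℕ) : Matrix (Fin n) (Fin n) ℝ :=
  Matrix.of fun i j =>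
    if (j : ℕ) = (i : ℕ) then (lam : ℝ) / ((lam : ℝ) + (i : ℕ))
    else if (j : ℕ) = (i : ℕ) + 2 then -((lam : ℝ) / ((lam : ℝ) + (i : ℕ) + 2)) else 0

/-- The matrix norm induced by the `ℓ∞` vector norm: the maximum absolute row sum. -/
noncomputable def matNorm {ι κ : Type*} [Fintype ι] [Fintype κ] (A : Matrix ι κ ℝ) : ℝ :=
  ⨆ i, ∑ j, |A i j|

/-- Explicit inverse of `Sl`. -/
noncomputable def Tl (lam n : ℕ) : Matrix (Fin n) (Fin n) ℝ :=
  Matrix.of fun i j =>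
    if (i : ℕ) ≤ (j : ℕ) ∧ ((j : ℕ) - (i : ℕ)) % 2 = 0 then ((lam : ℝ) + (i : ℕ)) / lam else 0

lemma Sl_mul_Tl (lam n : ℕ) (hlam : 1 ≤ lam) : Sl lam n * Tl lam n = 1 := by
  have hl : (0:ℝ) < lam := by exact_mod_cast hlam
  ext i j
  rw [Matrix.mul_apply]
  have hli : (0:ℝ) < (lam:ℝ) + i := by positivity
  have hli2 : (0:ℝ) < (lam:ℝ) + (i:ℕ) + 2 := by positivity
  have hsplit : ∀ k : Fin n, Sl lam n i k * Tl lam n k j =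
      (if k = i then ((lam:ℝ)/((lam:ℝ)+(i:ℕ))) * Tl lam n i j else 0)
      + (if (k:ℕ) = (i:ℕ)+2 then -((lam:ℝ)/((lam:ℝ)+(i:ℕ)+2)) * Tl lam n k j else 0) := by
    intro k
    simp only [Sl, Matrix.of_apply]
    by_cases h1 : (k:ℕ) = (i:ℕ)
    · have hk : k = i := Fin.ext h1
      subst hk
      simp [h1]
    · have hk : ¬ k = i := fun h => h1 (by rw [h])
      by_cases h2 : (k:ℕ) = (i:ℕ)+2
      · simp [h1, h2, hk]
      · simp [h1, h2, hk]
  rw [Finset.sum_congr rfl (fun k _ => hsplit k), Finset.sum_add_distrib]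
  rw [Finset.sum_ite_eq' Finset.univ i]
  simp only [Finset.mem_univ, if_true]
  by_cases hn : (i:ℕ)+2 < n
  · set k0 : Fin n := ⟨(i:ℕ)+2, hn⟩ with hk0
    have hcond : ∀ k : Fin n, ((k:ℕ) = (i:ℕ)+2) ↔ k = k0 := by
      intro k; rw [Fin.ext_iff]
    have : (∑ k : Fin n, if (k:ℕ) = (i:ℕ)+2 then -((lam:ℝ)/((lam:ℝ)+(i:ℕ)+2)) * Tl lam n k j else 0)
        = -((lam:ℝ)/((lam:ℝ)+(i:ℕ)+2)) * Tl lam n k0 j := by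
      rw [Finset.sum_congr rfl (fun k _ => by rw [if_congr (hcond k) rfl rfl])]
      rw [Finset.sum_ite_eq' Finset.univ k0]
      simp
    rw [this]
    simp only [Tl, Matrix.of_apply, Matrix.one_apply]
    by_cases hij : i = j
    · subst hij
      have c1 : (i:ℕ) ≤ (i:ℕ) ∧ ((i:ℕ) - (i:ℕ)) % 2 = 0 := by omega
      have c2 : ¬((i:ℕ)+2 ≤ (i:ℕ) ∧ ((i:ℕ) - ((i:ℕ)+2)) % 2 = 0) := by omega
      rw [if_pos c1, if_neg c2, if_pos rfl]
      field_simp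
      ring
    · have hij' : (i:ℕ) ≠ (j:ℕ) := fun h => hij (Fin.ext h)
      rw [if_neg hij]
      by_cases c1 : (i:ℕ) ≤ (j:ℕ) ∧ ((j:ℕ) - (i:ℕ)) % 2 = 0
      · have c2 : (i:ℕ)+2 ≤ (j:ℕ) ∧ ((j:ℕ) - ((i:ℕ)+2)) % 2 = 0 := by omega
        rw [if_pos c1, if_pos c2]
        push_cast
        field_simp
        ring
        simp only [hk0, Fin.val_mk]
        push_cast
        ring
      · have c2 : ¬((i:ℕ)+2 ≤ (j:ℕ) ∧ ((j:ℕ) - ((i:ℕ)+2)) % 2 = 0) := by omega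
        rw [if_neg c1, if_neg c2]
        ring
  · have hz : (∑ k : Fin n, if (k:ℕ) = (i:ℕ)+2 then -((lam:ℝ)/((lam:ℝ)+(i:ℕ)+2)) * Tl lam n k j else 0) = 0 := by
      apply Finset.sum_eq_zero
      intro k _
      have : (k:ℕ) ≠ (i:ℕ)+2 := by have := k.isLt; omega
      rw [if_neg this]
    rw [hz, add_zero]
    simp only [Tl, Matrix.of_apply, Matrix.one_apply]
    by_cases hij : i = j
    · subst hij
      have c1 : (i:ℕ) ≤ (i:ℕ) ∧ ((i:ℕ) - (i:ℕ)) % 2 = 0 := by omega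
      rw [if_pos c1, if_pos rfl]
      field_simp
    · have hij' : (i:ℕ) ≠ (j:ℕ) := fun h => hij (Fin.ext h)
      have hjlt := j.isLt
      have c1 : ¬((i:ℕ) ≤ (j:ℕ) ∧ ((j:ℕ) - (i:ℕ)) % 2 = 0) := by omega
      rw [if_neg c1, if_neg hij]
      ring

/-- For every `λ ≥ 1` there exists a constant `C_λ > 0` such that for every `n ≥ 1`,
`S_λ` is invertible and `‖S_λ⁻¹‖ ≤ C_λ n²` in the induced `ℓ∞` norm. -/
theorem stmt7 (lam : ℕ) (hlam : 1 ≤ lam) :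
    ∃ C : ℝ, 0 < C ∧ ∀ n : ℕ, 1 ≤ n →
      IsUnit (Sl lam n) ∧ matNorm ((Sl lam n)⁻¹) ≤ C * (n : ℝ) ^ 2 := by
  refine ⟨1, one_pos, fun n hn => ?_⟩
  have hl : (0:ℝ) < lam := by exact_mod_cast hlam
  have hST := Sl_mul_Tl lam n hlam
  have hTS : Tl lam n * Sl lam n = 1 := mul_eq_one_comm.mp hST
  have hUnit : IsUnit (Sl lam n) := ⟨⟨Sl lam n, Tl lam n, hST, hTS⟩, rfl⟩
  refine ⟨hUnit, ?_⟩
  rw [Matrix.inv_eq_right_inv hST]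
  haveI : Nonempty (Fin n) := Fin.pos_iff_nonempty.mp (by omega)
  rw [one_mul, matNorm]
  apply ciSup_le
  intro i
  have hrow : ∀ j : Fin n, |Tl lam n i j| ≤ ((lam:ℝ) + (i:ℕ)) / lam := by
    intro j
    simp only [Tl, Matrix.of_apply]
    split_ifs
    · rw [abs_of_nonneg (by positivity)]
    · rw [abs_zero]; positivity
  calc ∑ j, |Tl lam n i j| ≤ ∑ _j : Fin n, ((lam:ℝ) + (i:ℕ)) / lam :=
        Finset.sum_le_sum (fun j _ => hrow j)
    _ = n * (((lam:ℝ) + (i:ℕ)) / lam) := by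
        rw [Finset.sum_const, Finset.card_univ, Fintype.card_fin, nsmul_eq_mul]
    _ ≤ (n:ℝ) ^ 2 := by
        have hi : ((i:ℕ):ℝ) ≤ (n:ℝ) - 1 := by
          have := i.isLt
          have : ((i:ℕ):ℝ) + 1 ≤ (n:ℝ) := by exact_mod_cast this
          linarith
        have hlam1 : (1:ℝ) ≤ lam := by exact_mod_cast hlam
        have hdiv : ((lam:ℝ) + (i:ℕ)) / lam ≤ (n:ℝ) := by
          rw [div_le_iff₀ hl]
          nlinarith
        have hn0 : (0:ℝ) ≤ n := by positivity
        nlinarith
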